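/- Let G be a group. If the quotient G/Z(G) of G by its center is finite, then the commutator subgroup [G, G] is finite. -/

import Mathlib

/-!
A commutator `⁅g, h⁆` is unchanged when `g` or `h` is multiplied by a central element, so it
depends only on the classes of `g` and `h` in `G ⧸ Z(G)`. Hence a finite `G ⧸ Z(G)` leaves only
finitely many commutators, and a group with finitely many commutators has a finite commutator
subgroup (Mathlib's instance, via the transfer into the center).
-/

open scoped commutatorElement

section

variable {G : Type*} [Group G]

theorem commutatorElement_mul_mem_center_left (g h : G) {z : G} (hz : z ∈ Subgroup.center G) :
    ⁅g * z, h⁆ = ⁅g, h⁆ := by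
  simp only [commutatorElement_def, mul_inv_rev, mul_assoc]
  rw [← mul_assoc z h, ← Subgroup.mem_center_iff.mp hz h, mul_assoc h z, mul_inv_cancel_left]

theorem commutatorElement_mul_mem_center_right (g h : G) {z : G} (hz : z ∈ Subgroup.center G) :
    ⁅g, h * z⁆ = ⁅g, h⁆ := by
  simp only [commutatorElement_def, mul_inv_rev, mul_assoc]
  rw [← mul_assoc z g⁻¹, ← Subgroup.mem_center_iff.mp hz g⁻¹, mul_assoc g⁻¹ z,
    mul_inv_cancel_left]

theorem commutatorElement_out_mk_center (g h : G) :
    ⁅(g : G ⧸ Subgroup.center G).out, (h : G ⧸ Subgroup.center G).out⁆ = ⁅g, h⁆ := by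
  obtain ⟨⟨z, hz⟩, hgz⟩ := QuotientGroup.mk_out_eq_mul (Subgroup.center G) g
  obtain ⟨⟨w, hw⟩, hhw⟩ := QuotientGroup.mk_out_eq_mul (Subgroup.center G) h
  rw [hgz, hhw, commutatorElement_mul_mem_center_left _ _ hz,
    commutatorElement_mul_mem_center_right _ _ hw]

theorem commutatorSet_subset_range_out_center :
    commutatorSet G ⊆
      Set.range fun p : (G ⧸ Subgroup.center G) × (G ⧸ Subgroup.center G) ↦
        ⁅p.1.out, p.2.out⁆ := by
  rintro _ ⟨g, h, rfl⟩
  exact ⟨(g, h), commutatorElement_out_mk_center g h⟩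

theorem finite_commutatorSet_of_finite_quotient_center [Finite (G ⧸ Subgroup.center G)] :
    Finite (commutatorSet G) :=
  ((Set.finite_range _).subset commutatorSet_subset_range_out_center).to_subtype

end

theorem commutator_finite_of_finite_quotient_center
    {G : Type*} [Group G] (h : Finite (G ⧸ Subgroup.center G)) :
    Finite ↥(commutator G) := by
  have := finite_commutatorSet_of_finite_quotient_center (G := G)
  infer_instance
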